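/- arXiv:1811.04594 — 3 statements merged into one kernel-verified Lean document; each statement's English description precedes it below -/
import Mathlib

section
/- Let $\mu \in \{1,\ldots,n\}$, let $\lambda_1, \ldots, \lambda_n$ be real numbers with $0 \le \lambda_1 = \cdots = \lambda_\mu < \lambda_{\mu+1} \le \cdots \le \lambda_n$, let $H = \sum_{l=1}^n \lambda_l$, and let $(a_{ij})$ be any real numbers indexed by $1 \le i \le n$, $\mu < j \le n$. Then $H\sum_{i\ge 1,\, j>\mu}(\lambda_j - \lambda_1)^{-1} a_{ij}^2 \ge \sum_{i>\mu,\,j>\mu} a_{ii}\, a_{jj}$. -/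
open Finset

/-- Claim A.3 of the paper: with `0 ≤ λ_1 = ⋯ = λ_μ < λ_{μ+1} ≤ ⋯ ≤ λ_n`,
`H = ∑ λ_l`, and any reals `a_{ij}`,
`H ∑_{i ≥ 1, j > μ} (λ_j - λ_1)⁻¹ a_{ij}² ≥ ∑_{i > μ, j > μ} a_{ii} a_{jj}`. -/
theorem claim_strict (n μ : ℕ) (hμ1 : 1 ≤ μ) (hμn : μ ≤ n)
    (lam : Fin n → ℝ) (hmono : Monotone lam)
    (heq : ∀ i : Fin n, (i : ℕ) < μ → lam i = lam ⟨0, by omega⟩)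
    (hgt : ∀ j : Fin n, μ ≤ (j : ℕ) → lam ⟨0, by omega⟩ < lam j)
    (hpos : 0 ≤ lam ⟨0, by omega⟩)
    (a : Fin n → Fin n → ℝ) :
    (∑ i ∈ univ.filter (fun i : Fin n => μ ≤ (i : ℕ)),
        ∑ j ∈ univ.filter (fun j : Fin n => μ ≤ (j : ℕ)), a i i * a j j)
      ≤ (∑ l : Fin n, lam l) *
        ∑ i : Fin n, ∑ j ∈ univ.filter (fun j : Fin n => μ ≤ (j : ℕ)),
          (lam j - lam ⟨0, by omega⟩)⁻¹ * (a i j) ^ 2 := by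
  have hn : 0 < n := by omega
  set z : Fin n := ⟨0, by omega⟩ with hz
  set S : Finset (Fin n) := univ.filter (fun j : Fin n => μ ≤ (j : ℕ)) with hS
  set w : Fin n → ℝ := fun j => lam j - lam z with hw
  have hwpos : ∀ j ∈ S, 0 < w j := by
    intro j hj
    rw [hS, mem_filter] at hj
    exact sub_pos.mpr (hgt j hj.2)
  have hlampos : ∀ l : Fin n, 0 ≤ lam l := fun l =>
    hpos.trans (hmono (by simp [hz, Fin.le_def]))
  -- LHS rewrite
  have hLHS : (∑ i ∈ S, ∑ j ∈ S, a i i * a j j) = (∑ j ∈ S, a j j) ^ 2 := by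
    rw [sq, sum_mul_sum]
  -- Cauchy-Schwarz
  have hCS : (∑ j ∈ S, a j j) ^ 2
      ≤ (∑ j ∈ S, w j) * (∑ j ∈ S, (w j)⁻¹ * (a j j) ^ 2) := by
    have h := Finset.sum_mul_sq_le_sq_mul_sq S (fun j => Real.sqrt (w j))
      (fun j => a j j / Real.sqrt (w j))
    have h1 : (∑ j ∈ S, Real.sqrt (w j) * (a j j / Real.sqrt (w j)))
        = ∑ j ∈ S, a j j := by
      apply sum_congr rfl
      intro j hj
      rw [mul_comm, div_mul_cancel₀]
      exact Real.sqrt_ne_zero'.mpr (hwpos j hj)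
    have h2 : (∑ j ∈ S, Real.sqrt (w j) ^ 2) = ∑ j ∈ S, w j := by
      apply sum_congr rfl
      intro j hj
      exact Real.sq_sqrt (hwpos j hj).le
    have h3 : (∑ j ∈ S, (a j j / Real.sqrt (w j)) ^ 2)
        = ∑ j ∈ S, (w j)⁻¹ * (a j j) ^ 2 := by
      apply sum_congr rfl
      intro j hj
      rw [div_pow, Real.sq_sqrt (hwpos j hj).le, div_eq_inv_mul]
    rw [h1, h2, h3] at h
    exact h
  -- sum of weights ≤ H
  have hwH : (∑ j ∈ S, w j) ≤ ∑ l : Fin n, lam l := by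
    calc (∑ j ∈ S, w j) ≤ ∑ j ∈ S, lam j := by
          apply sum_le_sum
          intro j _
          have := hpos
          simp only [hw]
          linarith
      _ ≤ ∑ l : Fin n, lam l := by
          apply sum_le_sum_of_subset_of_nonneg (subset_univ S)
          intro l _ _
          exact hlampos l
  -- diagonal part ≤ full double sum
  have hdiag : (∑ j ∈ S, (w j)⁻¹ * (a j j) ^ 2)
      ≤ ∑ i : Fin n, ∑ j ∈ S, (w j)⁻¹ * (a i j) ^ 2 := by
    have : (∑ j ∈ S, (w j)⁻¹ * (a j j) ^ 2)
        = ∑ i : Fin n, if i ∈ S then (w i)⁻¹ * (a i i) ^ 2 else 0 := by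
      rw [sum_ite_mem, univ_inter]
    rw [this]
    apply sum_le_sum
    intro i _
    by_cases hi : i ∈ S
    · simp only [hi, if_true]
      exact single_le_sum (fun j hj => mul_nonneg (inv_nonneg.mpr (hwpos j hj).le) (sq_nonneg _)) hi
    · simp only [hi, if_false]
      exact sum_nonneg fun j hj => mul_nonneg (inv_nonneg.mpr (hwpos j hj).le) (sq_nonneg _)
  have hdiagnn : 0 ≤ ∑ j ∈ S, (w j)⁻¹ * (a j j) ^ 2 := by
    exact sum_nonneg fun j hj => mul_nonneg (inv_nonneg.mpr (hwpos j hj).le) (sq_nonneg _)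
  have hHnn : 0 ≤ ∑ l : Fin n, lam l := sum_nonneg fun l _ => hlampos l
  show (∑ i ∈ S, ∑ j ∈ S, a i i * a j j)
      ≤ (∑ l : Fin n, lam l) * ∑ i : Fin n, ∑ j ∈ S, (w j)⁻¹ * (a i j) ^ 2
  calc (∑ i ∈ S, ∑ j ∈ S, a i i * a j j)
      = (∑ j ∈ S, a j j) ^ 2 := hLHS
    _ ≤ (∑ j ∈ S, w j) * (∑ j ∈ S, (w j)⁻¹ * (a j j) ^ 2) := hCS
    _ ≤ (∑ l : Fin n, lam l) * (∑ j ∈ S, (w j)⁻¹ * (a j j) ^ 2) :=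
        mul_le_mul_of_nonneg_right hwH hdiagnn
    _ ≤ (∑ l : Fin n, lam l) * ∑ i : Fin n, ∑ j ∈ S, (w j)⁻¹ * (a i j) ^ 2 :=
        mul_le_mul_of_nonneg_left hdiag hHnn
end

section
/- Fix $\theta_1 \in (0, \pi/2)$ and set $c = \frac{\pi - \theta_1}{\pi - 2\theta_1}$. Then $c > 1$, and for every $\theta \in [0, \pi/2 - \theta_1]$ one has $c\theta \le \pi/2 - \theta_1/2 < \pi/2$ and $\sec(c\theta) \le 2\sec\theta$. -/
open Real

/-- For `θ₁ ∈ (0, π/2)` and `c = (π - θ₁)/(π - 2θ₁)`, one has `c > 1`, and for all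
`θ ∈ [0, π/2 - θ₁]`: `cθ ≤ π/2 - θ₁/2 < π/2` and `sec(cθ) ≤ 2 sec θ`. -/
theorem sec_comparison (θ₁ : ℝ) (h1 : 0 < θ₁) (h2 : θ₁ < π / 2)
    (c : ℝ) (hc : c = (π - θ₁) / (π - 2 * θ₁)) :
    1 < c ∧ ∀ θ : ℝ, 0 ≤ θ → θ ≤ π / 2 - θ₁ →
      c * θ ≤ π / 2 - θ₁ / 2 ∧ π / 2 - θ₁ / 2 < π / 2 ∧
        1 / Real.cos (c * θ) ≤ 2 * (1 / Real.cos θ) := by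
  have hπ : (0:ℝ) < π := Real.pi_pos
  have hden : 0 < π - 2 * θ₁ := by linarith
  have hcmul : c * (π - 2 * θ₁) = π - θ₁ := by
    rw [hc, div_mul_cancel₀]; exact ne_of_gt hden
  have hc1 : 1 < c := by
    rw [hc, lt_div_iff₀ hden]; linarith
  refine ⟨hc1, fun θ hθ0 hθ1 => ?_⟩
  have hcθ : c * θ ≤ π / 2 - θ₁ / 2 := by nlinarith
  refine ⟨hcθ, by linarith, ?_⟩
  have hcθ0 : 0 ≤ c * θ := by nlinarith
  have hcoscθ : 0 < Real.cos (c * θ) :=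
    Real.cos_pos_of_mem_Ioo ⟨by linarith, by linarith⟩
  have hcosθ : 0 < Real.cos θ :=
    Real.cos_pos_of_mem_Ioo ⟨by linarith, by linarith⟩
  have key : Real.cos θ ≤ 2 * Real.cos (c * θ) := by
    have hs : (π / 2 - θ) / 2 ≤ π / 2 - c * θ := by nlinarith
    -- sin ((π/2-θ)/2) ≤ sin (π/2 - c θ)
    have hmono : Real.sin ((π / 2 - θ) / 2) ≤ Real.sin (π / 2 - c * θ) := by
      apply Real.strictMonoOn_sin.monotoneOn
      · constructor <;> [linarith; linarith]
      · constructor <;> [linarith; linarith]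
      · exact hs
    have hsin0 : 0 ≤ Real.sin ((π / 2 - θ) / 2) :=
      Real.sin_nonneg_of_nonneg_of_le_pi (by linarith) (by linarith)
    have hdouble : Real.cos θ ≤ 2 * Real.sin ((π / 2 - θ) / 2) := by
      have h3 : Real.cos θ = Real.sin (2 * ((π / 2 - θ) / 2)) := by
        rw [show 2 * ((π / 2 - θ) / 2) = π / 2 - θ by ring, Real.sin_pi_div_two_sub]
      rw [h3, Real.sin_two_mul]
      have hcle : Real.cos ((π / 2 - θ) / 2) ≤ 1 := Real.cos_le_one _
      nlinarith
    have h4 : Real.sin (π / 2 - c * θ) = Real.cos (c * θ) := Real.sin_pi_div_two_sub _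
    linarith
  rw [div_le_iff₀ hcoscθ]
  rw [show 2 * (1 / Real.cos θ) * Real.cos (c * θ)
      = (2 * Real.cos (c * θ)) / Real.cos θ by ring]
  rw [le_div_iff₀ hcosθ]
  linarith
end

section
/- Let $A$ and $B$ be nonempty compact convex subsets of $\mathbb{R}^{n+1}$ with nonempty interiors. Then the Hausdorff distance between $A$ and $B$ equals the Hausdorff distance between their boundaries: $d_H(A, B) = d_H(\partial A, \partial B)$. -/
/-! Both inequalities are checked point by point. The topological input is that a connected set
(a segment or a ray) meeting a set and its complement meets its frontier; the geometric input is a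
separating hyperplane: the one through the nearest point of `B` for
`d_H(A, B) ≤ d_H(∂A, ∂B)`, a supporting hyperplane of `A` for the converse. -/

open Metric Set
open scoped RealInnerProductSpace

theorem IsPreconnected.inter_frontier_nonempty {α : Type*} [TopologicalSpace α] {s t : Set α}
    (hs : IsPreconnected s) (hst : (s ∩ t).Nonempty) (hst' : (s \ t).Nonempty) :
    (s ∩ frontier t).Nonempty := by
  by_contra hfr
  have hsub : s ⊆ interior t ∪ (closure t)ᶜ := fun z hz => by
    by_contra hz'
    simp only [mem_union, mem_compl_iff, not_or, not_not] at hz'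
    exact hfr ⟨z, hz, hz'.2, hz'.1⟩
  obtain ⟨p, hps, hpt⟩ := hst
  have hp : p ∈ interior t := (hsub hps).resolve_right (not_not.2 (subset_closure hpt))
  have hs_int : s ⊆ interior t :=
    hs.subset_left_of_subset_union isOpen_interior isClosed_closure.isOpen_compl
      (disjoint_compl_right.mono_left interior_subset_closure) hsub ⟨p, hps, hp⟩
  obtain ⟨q, hqs, hqt⟩ := hst'
  exact hqt (interior_subset (hs_int hqs))

section Normed

variable {E : Type*} [NormedAddCommGroup E] [NormedSpace ℝ E] {s : Set E} {x y : E}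

theorem infDist_frontier_le_dist_of_mem_of_notMem (hx : x ∈ s) (hy : y ∉ s) :
    infDist x (frontier s) ≤ dist x y := by
  obtain ⟨z, hz, hzs⟩ := (convex_segment x y).isPreconnected.inter_frontier_nonempty
    ⟨x, left_mem_segment ℝ x y, hx⟩ ⟨y, right_mem_segment ℝ x y, hy⟩
  calc infDist x (frontier s) ≤ dist x z := infDist_le_dist_of_mem hzs
    _ = dist z x := dist_comm x z
    _ ≤ dist x y := segment_subset_closedBall_left x y hz

theorem mem_of_dist_lt_infDist_frontier (hx : x ∈ s) (hy : dist x y < infDist x (frontier s)) :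
    y ∈ s := by
  by_contra hys
  exact (infDist_frontier_le_dist_of_mem_of_notMem hx hys).not_gt hy

theorem infDist_frontier_le_infDist_of_notMem (hs : s.Nonempty) (hx : x ∉ s) :
    infDist x (frontier s) ≤ infDist x s := by
  refine (le_infDist hs).2 fun b hb => ?_
  rw [← frontier_compl]
  exact infDist_frontier_le_dist_of_mem_of_notMem hx (not_not.2 hb)

theorem exists_nonneg_add_smul_mem_frontier (hs : Bornology.IsBounded s) (hx : x ∈ s)
    {v : E} (hv : v ≠ 0) : ∃ t : ℝ, 0 ≤ t ∧ x + t • v ∈ frontier s := by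
  obtain ⟨r, hr⟩ := hs.subset_closedBall x
  have hv' : 0 < ‖v‖ := norm_pos_iff.2 hv
  set t := (|r| + 1) / ‖v‖
  have hts : x + t • v ∉ s := fun h => by
    have := hr h
    rw [mem_closedBall, dist_eq_norm, add_sub_cancel_left, norm_smul, Real.norm_of_nonneg
      (by positivity), div_mul_cancel₀ _ hv'.ne'] at this
    linarith [le_abs_self r]
  have hray : IsPreconnected ((fun τ : ℝ => x + τ • v) '' Ici 0) :=
    isPreconnected_Ici.image _ (by fun_prop)
  obtain ⟨_, ⟨τ, hτ, rfl⟩, hτs⟩ := hray.inter_frontier_nonempty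
    ⟨x, ⟨0, mem_Ici.2 le_rfl, by simp⟩, hx⟩ ⟨_, ⟨t, mem_Ici.2 (by positivity), rfl⟩, hts⟩
  exact ⟨τ, hτ, hτs⟩

end Normed

section InnerProduct

variable {E : Type*} [NormedAddCommGroup E] [InnerProductSpace ℝ E] {s : Set E} {x y v : E}

theorem mul_norm_le_infDist_add_smul (hs : s.Nonempty) (hsv : ∀ b ∈ s, ⟪b - y, v⟫ ≤ 0)
    (t : ℝ) : t * ‖v‖ ≤ infDist (y + t • v) s := by
  rcases eq_or_ne v 0 with rfl | hv
  · simpa using infDist_nonneg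
  have hv' : 0 < ‖v‖ := norm_pos_iff.2 hv
  refine (le_infDist hs).2 fun b hb => le_of_mul_le_mul_right ?_ hv'
  calc t * ‖v‖ * ‖v‖ = ⟪t • v, v⟫ := by
        rw [real_inner_smul_left, real_inner_self_eq_norm_sq]; ring
    _ ≤ ⟪t • v, v⟫ - ⟪b - y, v⟫ := by linarith [hsv b hb]
    _ = ⟪y + t • v - b, v⟫ := by
        rw [← inner_sub_left]; congr 1; abel
    _ ≤ dist (y + t • v) b * ‖v‖ := by
        rw [dist_eq_norm]; exact real_inner_le_norm _ _

variable [CompleteSpace E]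

theorem exists_mem_forall_inner_sub_le_zero (hsc : IsClosed s) (hs : Convex ℝ s)
    (hne : s.Nonempty) (x : E) : ∃ y ∈ s, ∀ b ∈ s, ⟪b - y, x - y⟫ ≤ 0 := by
  obtain ⟨y, hy, hmin⟩ := exists_norm_eq_iInf_of_complete_convex hne hsc.isComplete hs x
  refine ⟨y, hy, fun b hb => ?_⟩
  rw [real_inner_comm]
  exact (norm_eq_iInf_iff_real_inner_le_zero hs hy).1 hmin b hb

theorem exists_ne_zero_forall_inner_sub_le_zero (hs : Convex ℝ s)
    (hsi : (interior s).Nonempty) (hx : x ∉ interior s) :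
    ∃ v ≠ 0, ∀ a ∈ s, ⟪a - x, v⟫ ≤ 0 := by
  obtain ⟨f, hf, hfx⟩ := geometric_hahn_banach_of_nonempty_interior_point hs hx hsi
  refine ⟨(InnerProductSpace.toDual ℝ E).symm f, by simpa using hf, fun a ha => ?_⟩
  rw [real_inner_comm, InnerProductSpace.toDual_symm_apply, map_sub]
  linarith [hfx a ha]

theorem infDist_le_hausdorffDist_frontier {A B : Set E} (hA : Bornology.IsBounded A)
    (hBcl : IsClosed B) (hBc : Convex ℝ B) (hfB : (frontier B).Nonempty)
    (hfin : hausdorffEDist (frontier A) (frontier B) ≠ ⊤) (hx : x ∈ A) :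
    infDist x B ≤ hausdorffDist (frontier A) (frontier B) := by
  have hBne : B.Nonempty := hfB.mono hBcl.frontier_subset
  by_cases hxB : x ∈ B
  · rw [infDist_zero_of_mem hxB]
    exact hausdorffDist_nonneg
  -- Moving from `x` straight away from its nearest point `y` of `B` never gets closer to `B`.
  obtain ⟨y, hyB, hy⟩ := exists_mem_forall_inner_sub_le_zero hBcl hBc hBne x
  have hxy : x - y ≠ 0 := sub_ne_zero.2 fun h => hxB (h ▸ hyB)
  obtain ⟨t, ht, hexit⟩ := exists_nonneg_add_smul_mem_frontier hA hx hxy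
  have hshift : x + t • (x - y) = y + (1 + t) • (x - y) := by module
  calc infDist x B ≤ dist x y := infDist_le_dist_of_mem hyB
    _ = ‖x - y‖ := dist_eq_norm x y
    _ ≤ (1 + t) * ‖x - y‖ := le_mul_of_one_le_left (norm_nonneg _) (by linarith)
    _ ≤ infDist (x + t • (x - y)) B := hshift ▸ mul_norm_le_infDist_add_smul hBne hy _
    _ ≤ infDist (x + t • (x - y)) (frontier B) :=
        infDist_le_infDist_of_subset hBcl.frontier_subset hfB
    _ ≤ hausdorffDist (frontier A) (frontier B) := infDist_le_hausdorffDist_of_mem hexit hfin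

theorem infDist_frontier_le_hausdorffDist {A B : Set E} (hAcl : IsClosed A) (hAc : Convex ℝ A)
    (hAi : (interior A).Nonempty) (hBne : B.Nonempty) (hfin : hausdorffEDist A B ≠ ⊤)
    (hx : x ∈ frontier A) : infDist x (frontier B) ≤ hausdorffDist A B := by
  by_cases hxB : x ∉ B
  · exact (infDist_frontier_le_infDist_of_notMem hBne hxB).trans
      (infDist_le_hausdorffDist_of_mem (hAcl.frontier_subset hx) hfin)
  rw [not_not] at hxB
  -- Step from `x` along an outer normal of `A`, by more than `hausdorffDist A B` but less than
  -- the distance to `frontier B`: the point stays in `B` yet is too far from `A`.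
  obtain ⟨v, hv, hAv⟩ := exists_ne_zero_forall_inner_sub_le_zero hAc hAi hx.2
  have hv' : 0 < ‖v‖ := norm_pos_iff.2 hv
  by_contra! hlt
  have hr : 0 ≤ hausdorffDist A B := hausdorffDist_nonneg
  set t := (hausdorffDist A B + infDist x (frontier B)) / 2 / ‖v‖
  have ht : t * ‖v‖ = (hausdorffDist A B + infDist x (frontier B)) / 2 :=
    div_mul_cancel₀ _ hv'.ne'
  have hq : x + t • v ∈ B := by
    refine mem_of_dist_lt_infDist_frontier hxB ?_
    rw [dist_eq_norm, sub_add_cancel_left, norm_neg, norm_smul,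
      Real.norm_of_nonneg (div_nonneg (by linarith) hv'.le), ht]
    linarith
  have hfar := mul_norm_le_infDist_add_smul (hAi.mono interior_subset) hAv t
  have hnear := infDist_le_hausdorffDist_of_mem hq (hausdorffEDist_comm (s := A) ▸ hfin)
  rw [hausdorffDist_comm] at hnear
  linarith

end InnerProduct

theorem IsCompact.nonempty_frontier {α : Type*} [TopologicalSpace α] [PreconnectedSpace α]
    [NoncompactSpace α] {s : Set α} (hs : IsCompact s) (hne : s.Nonempty) :
    (frontier s).Nonempty :=
  nonempty_frontier_iff.2 ⟨hne, fun h => noncompact_univ α (h ▸ hs)⟩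

/-- For nonempty compact convex bodies in `ℝ^(n+1)`, the Hausdorff distance equals
the Hausdorff distance of their boundaries. -/
theorem hausdorffDist_eq_boundaries (n : ℕ)
    (A B : Set (EuclideanSpace ℝ (Fin (n + 1))))
    (hA : IsCompact A) (hB : IsCompact B)
    (hAc : Convex ℝ A) (hBc : Convex ℝ B)
    (hAi : (interior A).Nonempty) (hBi : (interior B).Nonempty) :
    Metric.hausdorffDist A B = Metric.hausdorffDist (frontier A) (frontier B) := by
  have hAne : A.Nonempty := hAi.mono interior_subset
  have hBne : B.Nonempty := hBi.mono interior_subset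
  have hfA := hA.nonempty_frontier hAne
  have hfB := hB.nonempty_frontier hBne
  have hfin : hausdorffEDist A B ≠ ⊤ :=
    hausdorffEDist_ne_top_of_nonempty_of_bounded hAne hBne hA.isBounded hB.isBounded
  have hfin' : hausdorffEDist (frontier A) (frontier B) ≠ ⊤ :=
    hausdorffEDist_ne_top_of_nonempty_of_bounded hfA hfB
      (hA.isBounded.subset hA.isClosed.frontier_subset)
      (hB.isBounded.subset hB.isClosed.frontier_subset)
  apply le_antisymm
  · refine hausdorffDist_le_of_infDist hausdorffDist_nonneg (fun x hx => ?_) (fun x hx => ?_)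
    · exact infDist_le_hausdorffDist_frontier hA.isBounded hB.isClosed hBc hfB hfin' hx
    · rw [hausdorffDist_comm]
      exact infDist_le_hausdorffDist_frontier hB.isBounded hA.isClosed hAc hfA
        (hausdorffEDist_comm (s := frontier A) ▸ hfin') hx
  · refine hausdorffDist_le_of_infDist hausdorffDist_nonneg (fun x hx => ?_) (fun x hx => ?_)
    · exact infDist_frontier_le_hausdorffDist hA.isClosed hAc hAi hBne hfin hx
    · rw [hausdorffDist_comm]
      exact infDist_frontier_le_hausdorffDist hB.isClosed hBc hBi hAne
        (hausdorffEDist_comm (s := A) ▸ hfin) hx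
end
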